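/- arXiv:1010.4824 — 3 statements merged into one kernel-verified Lean document; each statement's English description precedes it below -/
import Mathlib

section
/- Markov chain through the belief: Let x take values in a standard Borel space X, y in a standard Borel space Y, with π(·) = P(x ∈ · | y) the regular conditional distribution. Then x and y are conditionally independent given π, i.e., for every bounded measurable f : X → ℝ, E[f(x) | y] = E[f(x) | π] almost surely (the conditional law of x given y coincides with the conditional law of x given σ(π)). -/
/-!
By the disintegration theorem, `E[f(x) | y] = ∫ f dπ` almost surely. The right-hand side is a
measurable function of the posterior `π` alone, so it is already `σ(π)`-measurable; since
`σ(π) ⊆ σ(y)`, the tower property gives `E[f(x) | π] = E[E[f(x) | y] | π] = E[f(x) | y]`.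
-/

open MeasureTheory ProbabilityTheory

theorem MeasureTheory.Measure.stronglyMeasurable_integral {X E : Type*} [MeasurableSpace X]
    [NormedAddCommGroup E] [NormedSpace ℝ E] {f : X → E} (hf : StronglyMeasurable f) :
    StronglyMeasurable fun ν : Measure X => ∫ a, f a ∂ν :=
  hf.integral_kernel (κ := ⟨id, measurable_id⟩)

theorem MeasureTheory.condExp_ae_eq_condExp_of_le_of_aestronglyMeasurable {Ω E : Type*}
    [NormedAddCommGroup E] [NormedSpace ℝ E] [CompleteSpace E]
    {m₁ m₂ m₀ : MeasurableSpace Ω} {μ : Measure Ω} {f : Ω → E} (hm₁₂ : m₁ ≤ m₂) (hm₂ : m₂ ≤ m₀)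
    [SigmaFinite (μ.trim hm₂)] [SigmaFinite (μ.trim (hm₁₂.trans hm₂))]
    (h : AEStronglyMeasurable[m₁] (μ[f | m₂]) μ) :
    μ[f | m₂] =ᵐ[μ] μ[f | m₁] :=
  (condExp_of_aestronglyMeasurable' (hm₁₂.trans hm₂) h integrable_condExp).symm.trans
    (condExp_condExp_of_le hm₁₂ hm₂)

theorem ProbabilityTheory.comap_condDistrib_comp_le {Ω X Y : Type*} {mΩ : MeasurableSpace Ω}
    [MeasurableSpace X] [StandardBorelSpace X] [Nonempty X] [MeasurableSpace Y]
    (μ : Measure Ω) [IsFiniteMeasure μ] (x : Ω → X) (y : Ω → Y) :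
    MeasurableSpace.comap (fun ω => condDistrib x y μ (y ω)) inferInstance
      ≤ MeasurableSpace.comap y inferInstance :=
  ((condDistrib x y μ).measurable.comp (comap_measurable y)).comap_le

theorem ProbabilityTheory.condExp_ae_eq_condExp_condDistrib_comp {Ω X Y E : Type*}
    {mΩ : MeasurableSpace Ω} [MeasurableSpace X] [StandardBorelSpace X] [Nonempty X]
    [MeasurableSpace Y] [NormedAddCommGroup E] [NormedSpace ℝ E] [CompleteSpace E]
    {μ : Measure Ω} [IsFiniteMeasure μ] {x : Ω → X} {y : Ω → Y} {f : X → E}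
    (hx : Measurable x) (hy : Measurable y) (hf : StronglyMeasurable f)
    (hfx : Integrable (fun ω => f (x ω)) μ) :
    μ[(fun ω => f (x ω)) | MeasurableSpace.comap y inferInstance]
      =ᵐ[μ]
    μ[(fun ω => f (x ω)) |
      MeasurableSpace.comap (fun ω => condDistrib x y μ (y ω)) inferInstance] := by
  have h_disint := condExp_ae_eq_integral_condDistrib hy hx.aemeasurable hf hfx
  have h_posterior : StronglyMeasurable[MeasurableSpace.comap (fun ω => condDistrib x y μ (y ω))
      inferInstance] fun ω => ∫ a, f a ∂condDistrib x y μ (y ω) :=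
    (Measure.stronglyMeasurable_integral hf).comp_measurable (comap_measurable _)
  exact condExp_ae_eq_condExp_of_le_of_aestronglyMeasurable (comap_condDistrib_comp_le μ x y)
    hy.comap_le (h_posterior.aestronglyMeasurable.congr h_disint.symm)

/-- Markov chain through the belief: the posterior `π(ω) = P(x ∈ · | y)(y ω)` is a
sufficient statistic of the observation `y` for the state `x`: for every bounded
measurable `f`, `E[f(x) | y] = E[f(x) | π]` almost surely. -/
theorem condExp_eq_condExp_posterior
    {Ω X Y : Type*} [MeasurableSpace Ω]
    [MeasurableSpace X] [StandardBorelSpace X] [Nonempty X]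
    [MeasurableSpace Y]
    (μ : Measure Ω) [IsProbabilityMeasure μ]
    (x : Ω → X) (hx : Measurable x) (y : Ω → Y) (hy : Measurable y)
    (f : X → ℝ) (hf : Measurable f) (C : ℝ) (hC : ∀ a, |f a| ≤ C) :
    μ[(fun ω => f (x ω)) | MeasurableSpace.comap y inferInstance]
      =ᵐ[μ]
    μ[(fun ω => f (x ω)) |
      MeasurableSpace.comap (fun ω => condDistrib x y μ (y ω)) inferInstance] :=
  condExp_ae_eq_condExp_condDistrib_comp hx hy hf.stronglyMeasurable <|
    Integrable.of_bound (hf.comp hx).aestronglyMeasurable C (ae_of_all _ fun ω => hC (x ω))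
end

section
/- Corollary (separation of estimation and quantization): Under the setting of the orthogonality decomposition, minimizing E[‖x − E[x|𝒢]‖²_Q] over sub-σ-algebras 𝒢 ⊆ ℋ generated by measurable maps from ℋ-measurable data into a fixed finite set is equivalent to minimizing E[‖m − E[m|𝒢]‖²_Q] where m = E[x|ℋ]; i.e., any quantizer of the raw observation can be replaced by a quantizer of the conditional mean m with the same induced cost up to the constant E[‖x − m‖²_Q]. -/
/-! With `m = μ[x|H]`, split `x - μ[x|G] = (x - m) + (m - μ[x|G])`. The second summand is
`H`-measurable because `G ≤ H`, and by the pull-out property `x - m` is orthogonal in `L²` to every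
square-integrable `H`-measurable function, so both cross terms of the quadratic form integrate to
zero. The tower property `μ[m|G] = μ[x|G]` identifies what remains with the cost of quantizing
`m`. -/

open MeasureTheory Matrix

section Bilinear

variable {Ω E F : Type*} {m0 : MeasurableSpace Ω} {μ : Measure Ω}
  [NormedAddCommGroup E] [NormedSpace ℝ E] [NormedAddCommGroup F] [NormedSpace ℝ F]

theorem ContinuousLinearMap.integrable_of_bilin_of_memLp_two (B : E →L[ℝ] F →L[ℝ] ℝ)
    {u : Ω → E} {v : Ω → F} (hu : MemLp u 2 μ) (hv : MemLp v 2 μ) :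
    Integrable (fun ω ↦ B (u ω) (v ω)) μ :=
  memLp_one_iff_integrable.1 (B.memLp_of_bilin 1 hu hv)

theorem ContinuousLinearMap.integral_bilin_add_add (B : E →L[ℝ] E →L[ℝ] ℝ) {u v : Ω → E}
    (hu : MemLp u 2 μ) (hv : MemLp v 2 μ) :
    ∫ ω, B (u ω + v ω) (u ω + v ω) ∂μ
      = ∫ ω, B (u ω) (u ω) ∂μ + ∫ ω, B (u ω) (v ω) ∂μ
        + ∫ ω, B (v ω) (u ω) ∂μ + ∫ ω, B (v ω) (v ω) ∂μ := by
  have h {a b : Ω → E} (ha : MemLp a 2 μ) (hb : MemLp b 2 μ) :=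
    B.integrable_of_bilin_of_memLp_two ha hb
  simp only [map_add, _root_.add_apply]
  rw [integral_add, integral_add (h hu hu) (h hv hu), integral_add (h hu hv) (h hv hv)]
  · ring
  · exact (h hu hu).add (h hv hu)
  · exact (h hu hv).add (h hv hv)

end Bilinear

section Orthogonality

variable {Ω E F : Type*} {G H m0 : MeasurableSpace Ω} {μ : Measure Ω} [IsFiniteMeasure μ]
  [NormedAddCommGroup E] [NormedSpace ℝ E] [CompleteSpace E]
  [NormedAddCommGroup F] [NormedSpace ℝ F]

theorem ContinuousLinearMap.integral_bilin_sub_condExp_left_eq_zero (B : E →L[ℝ] F →L[ℝ] ℝ)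
    (hH : H ≤ m0) {x : Ω → E} {w : Ω → F} (hx : MemLp x 2 μ) (hw : StronglyMeasurable[H] w)
    (hw2 : MemLp w 2 μ) :
    ∫ ω, B (x ω - μ[x|H] ω) (w ω) ∂μ = 0 := by
  have hpull : μ[fun ω ↦ B (x ω) (w ω)|H] =ᵐ[μ] fun ω ↦ B (μ[x|H] ω) (w ω) :=
    condExp_bilin_of_stronglyMeasurable_right B hw (B.integrable_of_bilin_of_memLp_two hx hw2)
      (hx.integrable one_le_two)
  simp only [map_sub, _root_.sub_apply]
  rw [integral_sub (B.integrable_of_bilin_of_memLp_two hx hw2)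
      (B.integrable_of_bilin_of_memLp_two (hx.condExp one_le_two) hw2),
    ← integral_condExp hH (f := fun ω ↦ B (x ω) (w ω)), integral_congr_ae hpull, sub_self]

theorem ContinuousLinearMap.integral_bilin_sub_condExp_right_eq_zero (B : F →L[ℝ] E →L[ℝ] ℝ)
    (hH : H ≤ m0) {x : Ω → E} {w : Ω → F} (hx : MemLp x 2 μ) (hw : StronglyMeasurable[H] w)
    (hw2 : MemLp w 2 μ) :
    ∫ ω, B (w ω) (x ω - μ[x|H] ω) ∂μ = 0 :=
  B.flip.integral_bilin_sub_condExp_left_eq_zero hH hx hw hw2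

theorem ContinuousLinearMap.integral_bilin_sub_condExp_of_le (B : E →L[ℝ] E →L[ℝ] ℝ)
    (hGH : G ≤ H) (hH : H ≤ m0) {x : Ω → E} (hx : MemLp x 2 μ) :
    ∫ ω, B (x ω - μ[x|G] ω) (x ω - μ[x|G] ω) ∂μ
      = ∫ ω, B (x ω - μ[x|H] ω) (x ω - μ[x|H] ω) ∂μ
        + ∫ ω, B (μ[x|H] ω - μ[μ[x|H]|G] ω) (μ[x|H] ω - μ[μ[x|H]|G] ω) ∂μ := by
  set d := μ[x|H] - μ[x|G]
  have hd : MemLp d 2 μ := (hx.condExp one_le_two).sub (hx.condExp one_le_two)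
  have hd_meas : StronglyMeasurable[H] d :=
    stronglyMeasurable_condExp.sub (stronglyMeasurable_condExp.mono hGH)
  have hsplit : ∀ ω, x ω - μ[x|G] ω = (x ω - μ[x|H] ω) + d ω := fun ω ↦ by simp [d]
  have htower : ∫ ω, B (μ[x|H] ω - μ[μ[x|H]|G] ω) (μ[x|H] ω - μ[μ[x|H]|G] ω) ∂μ
      = ∫ ω, B (d ω) (d ω) ∂μ := by
    refine integral_congr_ae ?_
    filter_upwards [condExp_condExp_of_le hGH hH (μ := μ) (f := x)] with ω hω
    simp [d, hω]
  simp only [hsplit, htower]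
  rw [B.integral_bilin_add_add (u := fun ω ↦ x ω - μ[x|H] ω) (hx.sub (hx.condExp one_le_two)) hd,
    B.integral_bilin_sub_condExp_left_eq_zero hH hx hd_meas hd,
    B.integral_bilin_sub_condExp_right_eq_zero hH hx hd_meas hd]
  ring

end Orthogonality

theorem separation_of_estimation_and_quantization_general
    {Ω M : Type*} {m0 : MeasurableSpace Ω} (μ : Measure Ω) [IsProbabilityMeasure μ]
    {n : ℕ} (Q : Matrix (Fin n) (Fin n) ℝ)
    (H : MeasurableSpace Ω) (hH : H ≤ m0)
    [MeasurableSpace M]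
    (f : Ω → M) (hf : @Measurable Ω M H _ f)
    (x : Ω → (Fin n → ℝ)) (hx : MemLp x 2 μ) :
    ∀ G : MeasurableSpace Ω, G = MeasurableSpace.comap f inferInstance →
    ∀ m : Ω → (Fin n → ℝ), m = μ[x|H] →
    ∫ ω, (x ω - (μ[x|G]) ω) ⬝ᵥ Q *ᵥ (x ω - (μ[x|G]) ω) ∂μ
      = ∫ ω, (x ω - m ω) ⬝ᵥ Q *ᵥ (x ω - m ω) ∂μ
        + ∫ ω, (m ω - (μ[m|G]) ω) ⬝ᵥ Q *ᵥ (m ω - (μ[m|G]) ω) ∂μ := by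
  rintro G rfl m rfl
  simpa only [LinearMap.toContinuousBilinearMap_apply, Matrix.toLinearMap₂'_apply'] using
    (Matrix.toLinearMap₂' ℝ Q).toContinuousBilinearMap.integral_bilin_sub_condExp_of_le
      hf.comap_le hH hx

/-- Separation of estimation and quantization: for any quantizer `f` of the raw data
(an `ℋ`-measurable map into a finite set `M`) generating `𝒢 = σ(f)`, the weighted
quadratic cost decomposes as the constant estimation error `E[‖x − m‖²_Q]` with
`m = E[x|ℋ]` plus the cost `E[‖m − E[m|𝒢]‖²_Q]` of quantizing the estimate `m`. -/
theorem separation_of_estimation_and_quantization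
    {Ω M : Type*} {m0 : MeasurableSpace Ω} (μ : Measure Ω) [IsProbabilityMeasure μ]
    {n : ℕ} (Q : Matrix (Fin n) (Fin n) ℝ) (hQ : Q.PosDef)
    (H : MeasurableSpace Ω) (hH : H ≤ m0)
    [Fintype M] [MeasurableSpace M] [MeasurableSingletonClass M]
    (f : Ω → M) (hf : @Measurable Ω M H _ f)
    (x : Ω → (Fin n → ℝ)) (hx : MemLp x 2 μ) :
    ∀ G : MeasurableSpace Ω, G = MeasurableSpace.comap f inferInstance →
    ∀ m : Ω → (Fin n → ℝ), m = μ[x|H] →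
    ∫ ω, (x ω - (μ[x|G]) ω) ⬝ᵥ Q *ᵥ (x ω - (μ[x|G]) ω) ∂μ
      = ∫ ω, (x ω - m ω) ⬝ᵥ Q *ᵥ (x ω - m ω) ∂μ
        + ∫ ω, (m ω - (μ[m|G]) ω) ⬝ᵥ Q *ᵥ (m ω - (μ[m|G]) ω) ∂μ :=
  separation_of_estimation_and_quantization_general μ Q H hH f hf x hx
end

section
/- Counterexample computation, part 2 (lower bound): Let z₁, z₂, z₃ be independent uniform Bernoulli random variables. If a decoder's estimate v is a measurable function of (z₁, z₂ ⊕ z₃) only, then E[(z₃ − v)²] ≥ 1/4, with the minimum attained by v ≡ 1/2. -/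
/-!
The triple `(z₁, z₂, z₃)` is uniformly distributed on `Bool³`, so the error is an average over
the eight outcomes. For each value `(a, w)` of the observation `(z₁, z₂ ⊕ z₃)`, exactly one
outcome has `z₃ = 0` and one has `z₃ = 1`, so the estimate `x = v a w` contributes
`(1 - x)² + x² = 2 (x - 1/2)² + 1/2 ≥ 1/2` per pair: the observation carries no information
about `z₃`.
-/

open MeasureTheory ProbabilityTheory

theorem Fintype.sum_fin_succ_pi {M α : Type*} [AddCommMonoid M] [Fintype α] {n : ℕ}
    (f : (Fin (n + 1) → α) → M) : ∑ x, f x = ∑ a, ∑ x, f (Matrix.vecCons a x) := by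
  rw [← (Fin.consEquiv fun _ => α).sum_comp, Fintype.sum_prod_type]
  rfl

theorem one_half_le_sq_one_sub_add_sq (x : ℝ) : 1 / 2 ≤ (1 - x) ^ 2 + x ^ 2 := by
  nlinarith [sq_nonneg (x - 1 / 2)]

section FairBits

variable {Ω : Type*} [MeasurableSpace Ω] {μ : Measure Ω} [IsProbabilityMeasure μ]

theorem measure_preimage_singleton_of_fair {z : Ω → Bool} (hz : Measurable z)
    (hfair : μ (z ⁻¹' {true}) = 1 / 2) (b : Bool) : μ (z ⁻¹' {b}) = 1 / 2 := by
  cases b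
  · have hcompl : z ⁻¹' {false} = (z ⁻¹' {true})ᶜ := by
      ext ω
      simp
    rw [hcompl, measure_compl (hz (measurableSet_singleton _)) (measure_ne_top μ _), hfair,
      measure_univ, ENNReal.sub_half ENNReal.one_ne_top]
  · exact hfair

variable {ι : Type*} [Fintype ι] {z : ι → Ω → Bool}

theorem map_apply_singleton_of_iIndepFun_fair (hz : ∀ i, Measurable (z i))
    (hind : iIndepFun z μ) (hfair : ∀ i, μ (z i ⁻¹' {true}) = 1 / 2) (x : ι → Bool) :
    μ.map (fun ω i => z i ω) {x} = (1 / 2) ^ Fintype.card ι := by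
  rw [hind.map_fun_eq_pi_map fun i => (hz i).aemeasurable, ← Set.univ_pi_singleton,
    Measure.pi_pi]
  simp only [Measure.map_apply (hz _) (measurableSet_singleton _),
    measure_preimage_singleton_of_fair (hz _) (hfair _), Finset.prod_const, Finset.card_univ]

theorem integral_comp_eq_average_of_iIndepFun_fair [DecidableEq ι] (hz : ∀ i, Measurable (z i))
    (hind : iIndepFun z μ) (hfair : ∀ i, μ (z i ⁻¹' {true}) = 1 / 2) (g : (ι → Bool) → ℝ) :
    ∫ ω, g (fun i => z i ω) ∂μ = (∑ x, g x) / 2 ^ Fintype.card ι := by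
  have hZ : Measurable fun ω i => z i ω := measurable_pi_lambda _ hz
  rw [← integral_map hZ.aemeasurable (measurable_of_countable g).aestronglyMeasurable,
    integral_fintype .of_finite, Finset.sum_div]
  refine Finset.sum_congr rfl fun x _ => ?_
  rw [measureReal_def, map_apply_singleton_of_iIndepFun_fair hz hind hfair, smul_eq_mul]
  simp [div_eq_inv_mul]

end FairBits

/-- Counterexample, lower bound: if the decoder's estimate is a function of
`(z₁, z₂ ⊕ z₃)` only, then the quadratic error of estimating `z₃` is at least `1/4`,
and the constant estimate `1/2` attains it. -/
theorem counterexample_lower_bound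
    {Ω : Type*} [MeasurableSpace Ω] (μ : Measure Ω) [IsProbabilityMeasure μ]
    (z₁ z₂ z₃ : Ω → Bool) (h₁ : Measurable z₁) (h₂ : Measurable z₂) (h₃ : Measurable z₃)
    (hind : iIndepFun ![z₁, z₂, z₃] μ)
    (hunif : ∀ i : Fin 3, μ ((![z₁, z₂, z₃] i) ⁻¹' {true}) = 1 / 2) :
    (∀ v : Bool → Bool → ℝ,
      (1 : ℝ) / 4 ≤ ∫ ω, ((if z₃ ω then (1 : ℝ) else 0) - v (z₁ ω) (xor (z₂ ω) (z₃ ω))) ^ 2 ∂μ) ∧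
    ∫ ω, ((if z₃ ω then (1 : ℝ) else 0) - 1 / 2) ^ 2 ∂μ = 1 / 4 := by
  have hz : ∀ i, Measurable (![z₁, z₂, z₃] i) := fun i => by fin_cases i <;> assumption
  have average := integral_comp_eq_average_of_iIndepFun_fair hz hind hunif
  constructor
  · intro v
    refine le_of_le_of_eq ?_
      (average fun x => ((if x 2 then (1 : ℝ) else 0) - v (x 0) (xor (x 1) (x 2))) ^ 2).symm
    simp only [Fintype.sum_fin_succ_pi, Fintype.sum_bool, Matrix.cons_val]
    norm_num
    linarith [one_half_le_sq_one_sub_add_sq (v true true),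
      one_half_le_sq_one_sub_add_sq (v true false), one_half_le_sq_one_sub_add_sq (v false true),
      one_half_le_sq_one_sub_add_sq (v false false)]
  · refine (average fun x => ((if x 2 then (1 : ℝ) else 0) - 1 / 2) ^ 2).trans ?_
    simp only [Fintype.sum_fin_succ_pi, Fintype.sum_bool, Matrix.cons_val]
    norm_num
end
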